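/- Let x ∈ Λ_I ⊂ Λ̄ and a = a_{ij} with j ∈ I and i ∉ I. Then f_x(a) = +∞, i.e. x does not lie in the closure (in Λ̄) of any half-space { z ∈ Λ : a(z) ≥ s }. -/

import Mathlib

/-!
To separate `x` from `{a_{ij} ≥ s}`: since `i ∉ I`, `x ∈ Λ_I` lifts to a point `z ∈ Λ` with
`a_{ij}(z) = s - 3`. For the unit ball `U` around `z`, the basic open set `C_U^I` contains `x`,
and its trace on `Λ` is `U + D_I`. The cone `D_I` only lowers coordinates outside `I`, so it
cannot increase `a_{ij} = χ_i - χ_j`; hence `a_{ij} < s - 1` on that trace.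
-/

open Set Pointwise Topology Filter

namespace CompApp

variable {n : ℕ}

/-- The component `Λ_I`: the quotient of the functions `I → ℝ` by the line of
constants (so `Λ_I = Σ_{i∈I} ℝ η_i^I` with the relation `Σ_{i∈I} η_i^I = 0`). -/
abbrev Comp (I : Finset (Fin n)) : Type :=
  (↥I → ℝ) ⧸ (Submodule.span ℝ {(1 : ↥I → ℝ)})

/-- quotient map onto a component -/
noncomputable def mkC (I : Finset (Fin n)) : (↥I → ℝ) →ₗ[ℝ] Comp I :=
  Submodule.mkQ _

/-- The apartment `Λ` itself, i.e. the component for `I = {1,…,n}`. -/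
abbrev Apt (n : ℕ) : Type := Comp (Finset.univ : Finset (Fin n))

/-- restriction of functions from `{1,…,n}` to `J` -/
def resL (J : Finset (Fin n)) :
    ((↥(Finset.univ : Finset (Fin n)) → ℝ)) →ₗ[ℝ] (↥J → ℝ) :=
  LinearMap.funLeft ℝ ℝ (fun j => ⟨j.1, Finset.mem_univ _⟩)

/-- The projection `r_J : Λ → Λ_J`, `Σ x_i η_i ↦ Σ_{i∈J} x_i η_i^J`. -/
noncomputable def resQ (J : Finset (Fin n)) : Apt n →ₗ[ℝ] Comp J :=
  Submodule.mapQ _ _ (resL J) (by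
    rw [Submodule.span_le]
    intro x hx
    rw [Set.mem_singleton_iff] at hx
    subst hx
    exact Submodule.mem_comap.mpr (Submodule.subset_span rfl))

variable [NeZero n]

/-- The compactified apartment `Λ̄ = ⋃_{∅≠I⊆{1,…,n}} Λ_I` as a set. -/
def CApt (n : ℕ) : Type := Σ I : {I : Finset (Fin n) // I.Nonempty}, Comp I.1

/-- The embedding `Λ ↪ Λ̄`. -/
def emb (z : Apt n) : CApt n := ⟨⟨Finset.univ, Finset.univ_nonempty⟩, z⟩

/-- The point of the boundary component `Λ_I` inside `Λ̄`. -/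
def embC (I : Finset (Fin n)) (hI : I.Nonempty) (y : Comp I) : CApt n := ⟨⟨I, hI⟩, y⟩

/-- The cone `D_I = Σ_{i∉I} ℝ_{≥0}(−η_i) ⊆ Λ`. -/
noncomputable def cone (I : Finset (Fin n)) : Set (Apt n) :=
  (mkC _) '' {x | (∀ l : ↥(Finset.univ : Finset (Fin n)), (l : Fin n) ∈ I → x l = 0) ∧
    ∀ l : ↥(Finset.univ : Finset (Fin n)), (l : Fin n) ∉ I → x l ≤ 0}

/-- The basic open set `C_U^I = ⋃_{I ⊆ J} r_J(U + D_I) ⊆ Λ̄`. -/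
noncomputable def CUI (U : Set (Apt n)) (I : Finset (Fin n)) : Set (CApt n) :=
  {p | I ⊆ p.1.1 ∧ p.2 ∈ resQ p.1.1 '' (U + cone I)}

/-- Boundedness for subsets of the apartment `Λ`. -/
def BoundedA (U : Set (Apt n)) : Prop :=
  ∃ t : Set (↥(Finset.univ : Finset (Fin n)) → ℝ),
    Bornology.IsBounded t ∧ U ⊆ (mkC _) '' t

/-- The topology of `Λ̄`: generated by the open subsets of `Λ` together with the
sets `C_U^I` for nonempty proper `I` and bounded open `U ⊆ Λ`. -/
noncomputable instance : TopologicalSpace (CApt n) :=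
  TopologicalSpace.generateFrom
    ({s | ∃ U : Set (Apt n), IsOpen U ∧ s = emb '' U} ∪
     {s | ∃ (U : Set (Apt n)) (I : Finset (Fin n)), I.Nonempty ∧ I ≠ Finset.univ ∧
        IsOpen U ∧ BoundedA U ∧ s = CUI U I})

/-- The root `a_{ij} = χ_i − χ_j` as a linear functional on `Λ`. -/
noncomputable def aFun (i j : Fin n) : Apt n →ₗ[ℝ] ℝ :=
  Submodule.liftQ _
    (LinearMap.proj (⟨i, Finset.mem_univ i⟩ : ↥(Finset.univ : Finset (Fin n))) -
      LinearMap.proj ⟨j, Finset.mem_univ j⟩) (by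
    rw [Submodule.span_le]
    intro x hx
    rw [Set.mem_singleton_iff] at hx
    subst hx
    simp [LinearMap.mem_ker])

/-- The root `b_{ij}` of the component `Λ_I` (for `i, j ∈ I`). -/
noncomputable def bFun (I : Finset (Fin n)) (i j : ↥I) : Comp I →ₗ[ℝ] ℝ :=
  Submodule.liftQ _
    (LinearMap.proj (R := ℝ) (φ := fun _ : ↥I => ℝ) i -
      LinearMap.proj (R := ℝ) (φ := fun _ : ↥I => ℝ) j) (by
    rw [Submodule.span_le]
    intro x hx
    rw [Set.mem_singleton_iff] at hx
    subst hx
    simp [LinearMap.mem_ker])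

/-- The closure in `Λ̄` of the half-space `{ z ∈ Λ : a_{ij}(z) ≥ s }`. -/
noncomputable def halfCl (i j : Fin n) (s : ℝ) : Set (CApt n) :=
  closure (emb '' {z : Apt n | s ≤ aFun i j z})

/-- `f_Ω(a) = inf{ t : Ω ⊆ closure{ z ∈ Λ : a(z) ≥ −t } } ∈ ℝ ∪ {±∞}`,
for `a = a_{ij}` (with `inf ∅ = +∞`). -/
noncomputable def fO (Ω : Set (CApt n)) (i j : Fin n) : EReal :=
  sInf {t : EReal | ∃ s : ℝ, t = (s : EReal) ∧ Ω ⊆ halfCl i j (-s)}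

end CompApp

namespace CompApp

variable {n : ℕ}

lemma resQ_univ (z : Apt n) : resQ Finset.univ z = z := by
  obtain ⟨x, rfl⟩ := Submodule.mkQ_surjective _ z
  rfl

lemma resQ_mkC (J : Finset (Fin n)) (v : ↥(Finset.univ : Finset (Fin n)) → ℝ) :
    resQ J (mkC _ v) = mkC J (fun l => v ⟨l, Finset.mem_univ _⟩) :=
  rfl

lemma aFun_mkC (i j : Fin n) (w : ↥(Finset.univ : Finset (Fin n)) → ℝ) :
    aFun i j (mkC _ w) = w ⟨i, Finset.mem_univ i⟩ - w ⟨j, Finset.mem_univ j⟩ := by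
  simp [mkC, aFun]

lemma aFun_nonpos_of_mem_cone {I : Finset (Fin n)} {i j : Fin n} (hiI : i ∉ I) (hjI : j ∈ I)
    {d : Apt n} (hd : d ∈ cone I) : aFun i j d ≤ 0 := by
  obtain ⟨x, ⟨hxI, hxle⟩, rfl⟩ := hd
  rw [aFun_mkC, hxI ⟨j, Finset.mem_univ j⟩ hjI]
  linarith [hxle ⟨i, Finset.mem_univ i⟩ hiI]

lemma aFun_mkC_lt_of_mem_ball (i j : Fin n) {v w : ↥(Finset.univ : Finset (Fin n)) → ℝ}
    {r : ℝ} (hw : w ∈ Metric.ball v r) : aFun i j (mkC _ w) < aFun i j (mkC _ v) + 2 * r := by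
  have hcoord (l) : |w l - v l| < r :=
    (dist_le_pi_dist w v l).trans_lt (Metric.mem_ball.mp hw)
  rw [aFun_mkC, aFun_mkC]
  linarith [abs_lt.mp (hcoord ⟨i, Finset.mem_univ i⟩), abs_lt.mp (hcoord ⟨j, Finset.mem_univ j⟩)]

lemma aFun_lt_of_mem_ball_add_cone {I : Finset (Fin n)} {i j : Fin n} (hiI : i ∉ I)
    (hjI : j ∈ I) {v : ↥(Finset.univ : Finset (Fin n)) → ℝ} {r : ℝ} {z : Apt n}
    (hz : z ∈ mkC _ '' Metric.ball v r + cone I) : aFun i j z < aFun i j (mkC _ v) + 2 * r := by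
  obtain ⟨_, ⟨w, hw, rfl⟩, d, hd, rfl⟩ := hz
  rw [map_add]
  linarith [aFun_mkC_lt_of_mem_ball i j hw, aFun_nonpos_of_mem_cone hiI hjI hd]

lemma boundedA_mkC_ball (v : ↥(Finset.univ : Finset (Fin n)) → ℝ) (r : ℝ) :
    BoundedA (mkC _ '' Metric.ball v r) :=
  ⟨_, Metric.isBounded_ball, subset_rfl⟩

lemma isOpen_mkC_image {s : Set (↥(Finset.univ : Finset (Fin n)) → ℝ)} (hs : IsOpen s) :
    IsOpen (mkC _ '' s) :=
  Submodule.isOpenMap_mkQ _ _ hs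

lemma embC_mem_CUI {U : Set (Apt n)} {I : Finset (Fin n)} (hI : I.Nonempty) {y : Comp I}
    {z : Apt n} (hzU : z ∈ U) (hz : resQ I z = y) : embC I hI y ∈ CUI U I :=
  ⟨subset_rfl, z + 0, add_mem_add hzU ⟨0, ⟨fun _ _ => rfl, fun _ _ => le_rfl⟩, map_zero _⟩,
    by rw [add_zero]; exact hz⟩

lemma exists_resQ_eq_aFun_eq {I : Finset (Fin n)} {i j : Fin n} (hiI : i ∉ I) (hjI : j ∈ I)
    (y : Comp I) (t : ℝ) : ∃ z : Apt n, resQ I z = y ∧ aFun i j z = t := by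
  obtain ⟨y₀, rfl⟩ := Submodule.mkQ_surjective _ y
  let v : ↥(Finset.univ : Finset (Fin n)) → ℝ :=
    fun l => if h : (l : Fin n) ∈ I then y₀ ⟨l, h⟩ else t + y₀ ⟨j, hjI⟩
  refine ⟨mkC _ v, ?_, ?_⟩
  · rw [resQ_mkC]
    congr 1
    funext l
    exact dif_pos l.2
  · rw [aFun_mkC]
    simp only [v, dif_neg hiI, dif_pos hjI, add_sub_cancel_right]

variable [NeZero n]

lemma isOpen_CUI {U : Set (Apt n)} {I : Finset (Fin n)} (hI : I.Nonempty)
    (hIu : I ≠ Finset.univ) (hU : IsOpen U) (hUb : BoundedA U) : IsOpen (CUI U I) :=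
  TopologicalSpace.isOpen_generateFrom_of_mem (Or.inr ⟨U, I, hI, hIu, hU, hUb, rfl⟩)

lemma emb_mem_CUI_iff {U : Set (Apt n)} {I : Finset (Fin n)} {z : Apt n} :
    emb z ∈ CUI U I ↔ z ∈ U + cone I := by
  change I ⊆ Finset.univ ∧ z ∈ resQ Finset.univ '' (U + cone I) ↔ _
  simp only [resQ_univ, Set.image_id', Finset.subset_univ, true_and]

lemma embC_notMem_halfCl {I : Finset (Fin n)} (hI : I.Nonempty) (y : Comp I)
    {i j : Fin n} (hjI : j ∈ I) (hiI : i ∉ I) (s : ℝ) : embC I hI y ∉ halfCl i j s := by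
  intro hmem
  obtain ⟨z, hzy, hzs⟩ := exists_resQ_eq_aFun_eq hiI hjI y (s - 3)
  obtain ⟨v, rfl⟩ : ∃ v, mkC _ v = z := Submodule.mkQ_surjective _ z
  have hIu : I ≠ Finset.univ := fun h => hiI (h ▸ Finset.mem_univ i)
  have hopen : IsOpen (CUI (mkC _ '' Metric.ball v 1) I) :=
    isOpen_CUI hI hIu (isOpen_mkC_image Metric.isOpen_ball) (boundedA_mkC_ball v 1)
  have hx : embC I hI y ∈ CUI (mkC _ '' Metric.ball v 1) I :=
    embC_mem_CUI hI ⟨v, Metric.mem_ball_self one_pos, rfl⟩ hzy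
  obtain ⟨_, hp, w, hw, rfl⟩ := mem_closure_iff.mp hmem _ hopen hx
  have hlt := aFun_lt_of_mem_ball_add_cone hiI hjI (emb_mem_CUI_iff.mp hp)
  linarith [show s ≤ aFun i j w from hw]

lemma fO_singleton_eq_top {x : CApt n} {i j : Fin n} (hx : ∀ s : ℝ, x ∉ halfCl i j s) :
    fO {x} i j = ⊤ := by
  rw [fO, sInf_eq_top]
  rintro _ ⟨s, rfl, hsub⟩
  exact absurd (hsub rfl) (hx (-s))

theorem fO_eq_top_of_mem_not_mem_general {n : ℕ} [NeZero n]
    (I : Finset (Fin n)) (hI : I.Nonempty) (y : Comp I)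
    (i j : Fin n) (hjI : j ∈ I) (hiI : i ∉ I) :
    fO {embC I hI y} i j = ⊤ ∧
      ∀ s : ℝ, embC I hI y ∉ halfCl i j s :=
  ⟨fO_singleton_eq_top (embC_notMem_halfCl hI y hjI hiI),
    embC_notMem_halfCl hI y hjI hiI⟩

/-- Let `x ∈ Λ_I ⊂ Λ̄` and `a = a_{ij}` with `j ∈ I` and `i ∉ I`.  Then
`f_x(a) = +∞`, i.e. `x` does not lie in the closure (in `Λ̄`) of any half-space
`{ z ∈ Λ : a(z) ≥ s }`. -/
theorem fO_eq_top_of_mem_not_mem {n : ℕ} [NeZero n]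
    (I : Finset (Fin n)) (hI : I.Nonempty) (y : Comp I)
    (i j : Fin n) (hij : i ≠ j) (hjI : j ∈ I) (hiI : i ∉ I) :
    fO {embC I hI y} i j = ⊤ ∧
      ∀ s : ℝ, embC I hI y ∉ halfCl i j s :=
  fO_eq_top_of_mem_not_mem_general I hI y i j hjI hiI

end CompApp
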